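/- arXiv:1104.1034 — 5 statements merged into one kernel-verified Lean document; each statement's English description precedes it below -/
import Mathlib

section
/- Let C₁,…,C_m be the clauses of a CNF formula over variables x₁,…,xₙ. Define the Kripke structure W=(S,R,π) over the atomic propositions r₁,…,rₙ,p₁,…,pₙ by S={s₁,…,s_m}, R=∅, and for all i∈{1,…,m}, j∈{1,…,n}: π(s_i)∩{r_j,p_j}={r_j,p_j} if x_j occurs positively in C_i, ={r_j} if x_j occurs negatively in C_i, and =∅ if x_j does not occur in C_i. Then the CNF formula C₁∧…∧C_m is satisfiable if and only if W,{s₁,…,s_m} ⊨ ⋁_{j=1}^{n} (r_j ∧ dep(;p_j)), where dep(;p_j) denotes the 0-ary dependence atom. -/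
/-- Syntax of modal dependence logic (MDL) over atomic propositions `AP`. -/
inductive MDL (AP : Type) : Type where
  | top   : MDL AP                       -- ⊤
  | bot   : MDL AP                       -- ⊥
  | atom  : AP → MDL AP                  -- p
  | natom : AP → MDL AP                  -- ¬p
  | dep   : List AP → AP → MDL AP        -- dep(p₁,…,pₙ;q)
  | ndep  : List AP → AP → MDL AP        -- ¬dep(p₁,…,pₙ;q)
  | and   : MDL AP → MDL AP → MDL AP     -- ∧
  | dor   : MDL AP → MDL AP → MDL AP     -- dependence disjunction ∨
  | cor   : MDL AP → MDL AP → MDL AP     -- classical disjunction ⊻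
  | box   : MDL AP → MDL AP              -- □
  | dia   : MDL AP → MDL AP              -- ◇

/-- Team semantics of MDL over a Kripke structure `(S, R, π)`. -/
def MDL.sat {S AP : Type} (R : S → S → Prop) (π : S → Set AP) :
    MDL AP → Set S → Prop
  | .top, _ => True
  | .bot, T => T = ∅
  | .atom p, T => ∀ s ∈ T, p ∈ π s
  | .natom p, T => ∀ s ∈ T, p ∉ π s
  | .dep ps q, T => ∀ s₁ ∈ T, ∀ s₂ ∈ T,
      (∀ p ∈ ps, (p ∈ π s₁ ↔ p ∈ π s₂)) → (q ∈ π s₁ ↔ q ∈ π s₂)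
  | .ndep _ _, T => T = ∅
  | .and φ ψ, T => MDL.sat R π φ T ∧ MDL.sat R π ψ T
  | .dor φ ψ, T => ∃ T₁ T₂ : Set S, T = T₁ ∪ T₂ ∧ MDL.sat R π φ T₁ ∧ MDL.sat R π ψ T₂
  | .cor φ ψ, T => MDL.sat R π φ T ∨ MDL.sat R π ψ T
  | .box φ, T => MDL.sat R π φ {s' | ∃ s ∈ T, R s s'}
  | .dia φ, T => ∃ T' : Set S, MDL.sat R π φ T' ∧ ∀ s ∈ T, ∃ s' ∈ T', R s s'

/-- Big dependence disjunction ⋁ of a list of formulas (empty disjunction is ⊥). -/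
def MDL.bigDor {AP : Type} : List (MDL AP) → MDL AP
  | [] => .bot
  | [φ] => φ
  | φ :: ψ :: rest => .dor φ (MDL.bigDor (ψ :: rest))

/-- Big conjunction ⋀ of a list of formulas (empty conjunction is ⊤). -/
def MDL.bigAnd {AP : Type} : List (MDL AP) → MDL AP
  | [] => .top
  | [φ] => φ
  | φ :: ψ :: rest => .and φ (MDL.bigAnd (ψ :: rest))

/-- `◇^k φ` : `k` nested ◇ operators. -/
def MDL.diaIter {AP : Type} : ℕ → MDL AP → MDL AP
  | 0, φ => φ
  | n + 1, φ => .dia (MDL.diaIter n φ)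

/-- `□^k φ` : `k` nested □ operators. -/
def MDL.boxIter {AP : Type} : ℕ → MDL AP → MDL AP
  | 0, φ => φ
  | n + 1, φ => .box (MDL.boxIter n φ)

/-- A CNF formula with `m` clauses over `n` variables: `C i j = some true` iff
variable `x_j` occurs positively in clause `C_i`, `some false` iff it occurs
negatively, `none` iff it does not occur (each variable occurs at most once
per clause). -/
def CNF.Satisfiable {m n : ℕ} (C : Fin m → Fin n → Option Bool) : Prop :=
  ∃ θ : Fin n → Bool, ∀ i : Fin m, ∃ j : Fin n, C i j = some (θ j)


lemma sat_bigDor {S AP : Type} (R : S → S → Prop) (π : S → Set AP) :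
    ∀ (L : List (MDL AP)) (T : Set S),
    MDL.sat R π (MDL.bigDor L) T ↔
      ∃ Ts : Fin L.length → Set S, T = (⋃ k, Ts k) ∧ ∀ k, MDL.sat R π (L.get k) (Ts k)
  | [], T => by
      simp only [MDL.bigDor, MDL.sat, List.length_nil]
      constructor
      · rintro rfl
        exact ⟨fun k => k.elim0, by simp, fun k => k.elim0⟩
      · rintro ⟨Ts, rfl, _⟩
        simp
  | [φ], T => by
      simp only [MDL.bigDor, List.length_cons, List.length_nil]
      constructor
      · intro h
        exact ⟨fun _ => T, (Set.iUnion_const T).symm, fun k => match k with | ⟨0, _⟩ => h⟩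
      · rintro ⟨Ts, rfl, h⟩
        have h0 := h 0
        have : (⋃ k : Fin 1, Ts k) = Ts 0 := by
          ext s; simp [Fin.exists_fin_one]
        rw [this]
        exact h0
  | φ :: ψ :: rest, T => by
      show MDL.sat R π (.dor φ (MDL.bigDor (ψ :: rest))) T ↔ _
      rw [show MDL.sat R π (.dor φ (MDL.bigDor (ψ :: rest))) T =
        (∃ T₁ T₂ : Set S, T = T₁ ∪ T₂ ∧ MDL.sat R π φ T₁ ∧
          MDL.sat R π (MDL.bigDor (ψ :: rest)) T₂) from rfl]
      constructor
      · rintro ⟨T₁, T₂, rfl, h₁, h₂⟩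
        obtain ⟨Ts, rfl, hTs⟩ := (sat_bigDor R π (ψ :: rest) T₂).1 h₂
        refine ⟨Fin.cons T₁ Ts, ?_, ?_⟩
        · ext s; simp [Fin.exists_fin_succ]
        · intro k
          refine Fin.cases ?_ ?_ k
          · exact h₁
          · intro i; exact hTs i
      · rintro ⟨Ts, rfl, hTs⟩
        refine ⟨Ts (0 : Fin (rest.length + 2)), ⋃ i : Fin (rest.length + 1), Ts i.succ,
          ?_, hTs (0 : Fin (rest.length + 2)), ?_⟩
        · ext s; simp [Fin.exists_fin_succ]
        · exact (sat_bigDor R π (ψ :: rest) _).2 ⟨fun i => Ts i.succ, rfl, fun i => hTs i.succ⟩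

lemma sat_bigDor_map {S AP : Type} (R : S → S → Prop) (π : S → Set AP)
    (n : ℕ) (f : Fin n → MDL AP) (T : Set S) :
    MDL.sat R π (MDL.bigDor ((List.finRange n).map f)) T ↔
      ∃ Ts : Fin n → Set S, T = (⋃ j, Ts j) ∧ ∀ j, MDL.sat R π (f j) (Ts j) := by
  rw [sat_bigDor]
  have hlen : ((List.finRange n).map f).length = n := by simp
  have hget : ∀ k : Fin ((List.finRange n).map f).length,
      ((List.finRange n).map f).get k = f (Fin.cast hlen k) := by
    intro k
    rw [List.get_eq_getElem, List.getElem_map, List.getElem_finRange]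
    rfl
  constructor
  · rintro ⟨Ts, rfl, h⟩
    refine ⟨fun j => Ts (Fin.cast hlen.symm j), ?_, ?_⟩
    · ext s
      simp only [Set.mem_iUnion]
      exact ⟨fun ⟨k, hk⟩ => ⟨Fin.cast hlen k, hk⟩, fun ⟨j, hj⟩ => ⟨Fin.cast hlen.symm j, hj⟩⟩
    · intro j
      have := h (Fin.cast hlen.symm j)
      rwa [hget] at this
  · rintro ⟨Ts, rfl, h⟩
    refine ⟨fun k => Ts (Fin.cast hlen k), ?_, ?_⟩
    · ext s
      simp only [Set.mem_iUnion]
      exact ⟨fun ⟨j, hj⟩ => ⟨Fin.cast hlen.symm j, hj⟩, fun ⟨k, hk⟩ => ⟨Fin.cast hlen k, hk⟩⟩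
    · intro k
      rw [hget]
      exact h _

/-- Reduction of CNF satisfiability to MDL model checking for
the fragment {∧, ∨, dep}: the Kripke structure has worlds `s₁,…,s_m` (one per
clause), empty accessibility relation, and atomic propositions
`r₁,…,rₙ,p₁,…,pₙ` (here `Sum.inl j = r_j`, `Sum.inr j = p_j`), where
`r_j ∈ π(s_i)` iff `x_j` occurs in `C_i` and `p_j ∈ π(s_i)` iff `x_j` occurs
positively in `C_i`.  Then `C₁ ∧ … ∧ C_m` is satisfiable iff
`W, {s₁,…,s_m} ⊨ ⋁_{j=1}^n (r_j ∧ dep(;p_j))`. -/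
theorem stmt0 (m n : ℕ) (C : Fin m → Fin n → Option Bool) :
    CNF.Satisfiable C ↔
      MDL.sat (S := Fin m) (fun _ _ => False)
        (fun i => {a : Fin n ⊕ Fin n |
          match a with
          | Sum.inl j => C i j ≠ none
          | Sum.inr j => C i j = some true})
        (MDL.bigDor ((List.finRange n).map fun j =>
          MDL.and (MDL.atom (Sum.inl j)) (MDL.dep [] (Sum.inr j))))
        Set.univ := by
  classical
  rw [sat_bigDor_map]
  constructor
  · rintro ⟨θ, hθ⟩
    refine ⟨fun j => {i | C i j = some (θ j)}, ?_, ?_⟩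
    · ext i
      simp only [Set.mem_iUnion, Set.mem_univ, true_iff, Set.mem_setOf_eq]
      exact hθ i
    · intro j
      refine ⟨?_, ?_⟩
      · intro i hi
        show C i j ≠ none
        rw [hi]; simp
      · intro s₁ h₁ s₂ h₂ _
        show C s₁ j = some true ↔ C s₂ j = some true
        rw [show C s₁ j = some (θ j) from h₁, show C s₂ j = some (θ j) from h₂]
  · rintro ⟨Ts, hU, h⟩
    refine ⟨fun j => if ∃ i ∈ Ts j, C i j = some true then true else false, ?_⟩
    intro i
    obtain ⟨j, hij⟩ := Set.mem_iUnion.1 (hU ▸ Set.mem_univ i)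
    refine ⟨j, ?_⟩
    show C i j = some (if ∃ i' ∈ Ts j, C i' j = some true then true else false)
    have hr : C i j ≠ none := (h j).1 i hij
    obtain ⟨b, hb⟩ := Option.ne_none_iff_exists'.1 hr
    cases b with
    | true =>
      rw [if_pos ⟨i, hij, hb⟩]
      exact hb
    | false =>
      rw [if_neg]
      · exact hb
      · rintro ⟨i', hi', hi't⟩
        have := (h j).2 i hij i' hi' (by simp)
        have : C i j = some true ↔ C i' j = some true := this
        rw [hb, hi't] at this
        simp at this
end

section
/- Let C₁,…,C_m be the clauses of a CNF formula over variables x₁,…,xₙ. Define the Kripke structure W=(S,R,π) over the atomic propositions p₁,…,pₙ,q by S={c₁,…,c_m}∪{s_j^1, s_j^0 | j∈{1,…,n}}, R={(c_i,s_j^1) | x_j occurs positively in C_i}∪{(c_i,s_j^0) | x_j occurs negatively in C_i}, π(c_i)=∅, π(s_j^1)={p_j,q}, π(s_j^0)={p_j}. Then the CNF formula C₁∧…∧C_m is satisfiable if and only if W,{c₁,…,c_m} ⊨ ◇ dep(p₁,…,pₙ;q). -/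
/-- Reduction of CNF satisfiability to MDL model checking for
the fragment {◇, dep}.  Worlds: `Sum.inl i = c_i` (one per clause) and
`Sum.inr (j, b) = s_j^b` (one per literal); atomic propositions:
`some j = p_j`, `none = q`; `(c_i, s_j^1) ∈ R` iff `x_j` occurs positively in
`C_i` and `(c_i, s_j^0) ∈ R` iff `x_j` occurs negatively in `C_i`;
`π(c_i) = ∅`, `π(s_j^1) = {p_j, q}`, `π(s_j^0) = {p_j}`.  Then `C₁ ∧ … ∧ C_m`
is satisfiable iff `W, {c₁,…,c_m} ⊨ ◇ dep(p₁,…,pₙ;q)`. -/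
theorem stmt1 (m n : ℕ) (C : Fin m → Fin n → Option Bool) :
    CNF.Satisfiable C ↔
      MDL.sat (S := Fin m ⊕ (Fin n × Bool))
        (fun s s' =>
          match s, s' with
          | Sum.inl i, Sum.inr (j, b) => C i j = some b
          | _, _ => False)
        (fun s => {a : Option (Fin n) |
          match s with
          | Sum.inl _ => False
          | Sum.inr (j, b) => a = some j ∨ (b = true ∧ a = none)})
        (MDL.dia (MDL.dep ((List.finRange n).map some) none))
        (Set.range Sum.inl) := by
  constructor
  · rintro ⟨θ, hθ⟩
    refine ⟨{s | ∃ j, s = Sum.inr (j, θ j)}, ?_, ?_⟩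
    · rintro s₁ ⟨j₁, rfl⟩ s₂ ⟨j₂, rfl⟩ h
      have : j₁ = j₂ := by
        have h1 := (h (some j₁) (by simp)).mp (by simp [Set.mem_setOf_eq])
        simpa [Set.mem_setOf_eq] using h1
      subst this
      exact Iff.rfl
    · rintro s ⟨i, rfl⟩
      obtain ⟨j, hj⟩ := hθ i
      exact ⟨Sum.inr (j, θ j), ⟨j, rfl⟩, hj⟩
  · rintro ⟨T', hdep, hcov⟩
    classical
    refine ⟨fun j => if Sum.inr (j, true) ∈ T' then true else false, fun i => ?_⟩
    obtain ⟨s', hs', hR⟩ := hcov (Sum.inl i) ⟨i, rfl⟩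
    match s', hR with
    | Sum.inr (j, b), hR =>
      refine ⟨j, ?_⟩
      cases b with
      | true => simpa [hs'] using hR
      | false =>
        have hnot : Sum.inr (j, true) ∉ T' := by
          intro ht
          have := hdep (Sum.inr (j, true)) ht (Sum.inr (j, false)) hs' (by
            intro p hp
            simp only [List.mem_map] at hp
            obtain ⟨k, _, rfl⟩ := hp
            simp [Set.mem_setOf_eq])
          simp [Set.mem_setOf_eq] at this
        simpa [hnot] using hR
end

section
/- Let W=(S,R,π) be a finite Kripke structure and let φ be an MDL formula built from atoms, negated atoms, dependence atoms and negated dependence atoms using only the dependence disjunction ∨. If the number σ(φ) of positive (i.e., non-negated) dependence atoms occurring in φ satisfies 2^{σ(φ)} > |S|, then W,T ⊨ φ for every team T⊆S. -/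
/-- `φ` is built from atoms, negated atoms, dependence atoms and negated
dependence atoms using only the dependence disjunction `∨`. -/
def MDL.DorOnly {AP : Type} : MDL AP → Prop
  | .atom _ => True
  | .natom _ => True
  | .dep _ _ => True
  | .ndep _ _ => True
  | .dor φ ψ => MDL.DorOnly φ ∧ MDL.DorOnly ψ
  | _ => False

/-- `σ(φ)`: the number of occurrences of positive dependence atoms in `φ`. -/
def MDL.sigma {AP : Type} : MDL AP → ℕ
  | .dep _ _ => 1
  | .and φ ψ => MDL.sigma φ + MDL.sigma ψ
  | .dor φ ψ => MDL.sigma φ + MDL.sigma ψ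
  | .cor φ ψ => MDL.sigma φ + MDL.sigma ψ
  | .box φ => MDL.sigma φ
  | .dia φ => MDL.sigma φ
  | _ => 0

/-! Let `q₁, …, q_k` be the targets of the `k = σ(φ)` positive dependence atoms of `φ`. Since
`2 ^ k > |S|`, some `v ∈ Bool^k` is not the profile `(q_i ∈ π s)_i` of any world, so every world `s`
agrees with some literal `(q_i, ¬v_i)`. Splitting the team along the dependence disjunctions, send
each world to a dependence atom `dep(…; q_i)` with such a literal: on its part the target `q_i` is
constant, so the atom holds, and all other disjuncts receive the empty team. -/

namespace MDL

variable {S AP : Type}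

def depTargets : MDL AP → List AP
  | .dep _ q => [q]
  | .and φ ψ => depTargets φ ++ depTargets ψ
  | .dor φ ψ => depTargets φ ++ depTargets ψ
  | .cor φ ψ => depTargets φ ++ depTargets ψ
  | .box φ => depTargets φ
  | .dia φ => depTargets φ
  | _ => []

theorem length_depTargets (φ : MDL AP) : φ.depTargets.length = φ.sigma := by
  induction φ <;> simp [depTargets, sigma, *]

/-- The worlds satisfying at least one literal of `L`, where `(q, b)` stands for `q` if `b` and
for `¬q` otherwise. -/
def litUnion (π : S → Set AP) (L : List (AP × Bool)) : Set S :=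
  {s | ∃ l ∈ L, (l.1 ∈ π s ↔ l.2 = true)}

@[simp]
theorem litUnion_nil (π : S → Set AP) : litUnion π [] = ∅ := by
  simp [litUnion]

theorem litUnion_append (π : S → Set AP) (L₁ L₂ : List (AP × Bool)) :
    litUnion π (L₁ ++ L₂) = litUnion π L₁ ∪ litUnion π L₂ := by
  ext s
  simp only [litUnion, List.mem_append, or_and_right, exists_or, Set.mem_union, Set.mem_ofPred_eq]

theorem sat_of_subset_litUnion (R : S → S → Prop) (π : S → Set AP) {φ : MDL AP}
    (hφ : φ.DorOnly) {L : List (AP × Bool)} (hL : L.map Prod.fst = φ.depTargets) {T : Set S}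
    (hT : T ⊆ litUnion π L) : φ.sat R π T := by
  induction φ generalizing L T with
  | top | bot | and | cor | box | dia => exact hφ.elim
  | atom | natom | ndep =>
    simp only [depTargets, List.map_eq_nil_iff] at hL
    subst hL
    have hT : T = ∅ := Set.subset_empty_iff.mp (by simpa using hT)
    simp [sat, hT]
  | dep ps q =>
    obtain ⟨⟨_, b⟩, rfl, rfl⟩ := List.map_eq_singleton_iff.mp hL
    intro s₁ hs₁ s₂ hs₂ _
    simp only [litUnion, List.mem_singleton, exists_eq_left] at hT
    exact (hT hs₁).trans (hT hs₂).symm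
  | dor φ ψ ihφ ihψ =>
    obtain ⟨L₁, L₂, rfl, hL₁, hL₂⟩ := List.map_eq_append_iff.mp hL
    rw [litUnion_append] at hT
    refine ⟨T ∩ litUnion π L₁, T ∩ litUnion π L₂, ?_, ihφ hφ.1 hL₁ Set.inter_subset_right,
      ihψ hφ.2 hL₂ Set.inter_subset_right⟩
    rw [← Set.inter_union_distrib_left, Set.inter_eq_left.mpr hT]

/-- Pigeonhole: some valuation of `qs` is realised by no world, so every world satisfies one of the
literals of its negation. -/
theorem exists_litUnion_eq_univ [Fintype S] (π : S → Set AP) (qs : List AP)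
    (h : Fintype.card S < 2 ^ qs.length) :
    ∃ L : List (AP × Bool), L.map Prod.fst = qs ∧ litUnion π L = Set.univ := by
  classical
  let profile : S → Fin qs.length → Bool := fun s i => decide (qs[i] ∈ π s)
  have h_not_surj : ¬ Function.Surjective profile := fun hsurj => by
    have := Fintype.card_le_of_surjective profile hsurj
    simp only [Fintype.card_fun, Fintype.card_bool, Fintype.card_fin] at this
    omega
  obtain ⟨v, hv⟩ : ∃ v, ∀ s, profile s ≠ v := by simpa [Function.Surjective] using h_not_surj
  refine ⟨List.ofFn fun i => (qs[i], !v i), by simp [List.map_ofFn, Function.comp_def], ?_⟩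
  refine Set.eq_univ_of_forall fun s => ?_
  obtain ⟨i, hi⟩ := Function.ne_iff.mp (hv s)
  refine ⟨(qs[i], !v i), List.mem_ofFn.mpr ⟨i, rfl⟩, ?_⟩
  cases hvi : v i <;> simp_all [profile]

end MDL

/-- If `φ` uses only the dependence disjunction `∨` over
(negated) atoms and (negated) dependence atoms, and `φ` contains more than
`log₂ |S|` positive dependence atoms (i.e. `2^{σ(φ)} > |S|`), then `φ` is
satisfied by every team of the finite structure `W = (S, R, π)`. -/
theorem stmt8 {S AP : Type} [Fintype S] (R : S → S → Prop) (π : S → Set AP)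
    (φ : MDL AP) (hφ : MDL.DorOnly φ) (h : 2 ^ MDL.sigma φ > Fintype.card S)
    (T : Set S) :
    MDL.sat R π φ T := by
  obtain ⟨L, hL, hL_univ⟩ :=
    MDL.exists_litUnion_eq_univ π φ.depTargets (by rwa [MDL.length_depTargets])
  exact MDL.sat_of_subset_litUnion R π hφ hL (hL_univ ▸ Set.subset_univ T)
end

section
/- Let W=(S,R,π) be a Kripke structure, let ψ₁,…,ψ_ℓ be dependence atoms (each of the form dep(p₁,…,pₙ;q) with n ≥ 0), and let T⊆S be a finite team with |T| < 2^ℓ. Then for every k with 1 ≤ k ≤ ℓ there exists a subteam T_k ⊆ T such that W,T_k ⊨ ψ₁ ∨ ψ₂ ∨ … ∨ ψ_k (dependence disjunction) and |T ∖ T_k| < 2^{ℓ−k}. In particular (for k=ℓ), W,T ⊨ ψ₁ ∨ … ∨ ψ_ℓ. -/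
/-!
A dependence atom `dep(p̄; q)` holds on every team on which `q` is constant, so a finite team
splits into the part where `q` is true and the part where it is false, both satisfying the atom,
and one of them contains at least half of the team. Peeling off such a half for `ψ₁`, then for
`ψ₂` from the remainder, and so on, leaves after `k` steps a remainder of size at most
`|T| / 2^k < 2^(ℓ-k)`; for `k = ℓ` nothing remains.
-/

def MDL.SatOnHalf {S AP : Type} (R : S → S → Prop) (π : S → Set AP) (φ : MDL AP) : Prop :=
  ∀ U : Set S, U.Finite → ∃ A ⊆ U, MDL.sat R π φ A ∧ 2 * (U \ A).ncard ≤ U.ncard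

namespace MDL

variable {S AP : Type} (R : S → S → Prop) (π : S → Set AP)

theorem sat_dep_of_forall_mem_iff {ps : List AP} {q : AP} {A : Set S} {b : Prop}
    (hA : ∀ s ∈ A, q ∈ π s ↔ b) : sat R π (.dep ps q) A :=
  fun s₁ h₁ s₂ h₂ _ => (hA s₁ h₁).trans (hA s₂ h₂).symm

theorem satOnHalf_dep (ps : List AP) (q : AP) : SatOnHalf R π (.dep ps q) := by
  intro U hU
  set P := {s ∈ U | q ∈ π s}
  have hPU : P ⊆ U := Set.sep_subset U _
  have hcard : (U \ P).ncard + P.ncard = U.ncard := Set.ncard_sdiff_add_ncard_of_subset hPU hU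
  by_cases hP : 2 * (U \ P).ncard ≤ U.ncard
  · exact ⟨P, hPU, sat_dep_of_forall_mem_iff R π (b := True) fun s hs => iff_true_intro hs.2, hP⟩
  · refine ⟨U \ P, Set.sdiff_subset, sat_dep_of_forall_mem_iff R π (b := False)
      fun s hs => iff_false_intro fun hq => hs.2 ⟨hs.1, hq⟩, ?_⟩
    rw [Set.sdiff_sdiff_cancel_left hPU]
    omega

theorem exists_sat_bigDor {L : List (MDL AP)} (hL : ∀ φ ∈ L, SatOnHalf R π φ)
    {U : Set S} (hU : U.Finite) :
    ∃ A ⊆ U, sat R π (bigDor L) A ∧ 2 ^ L.length * (U \ A).ncard ≤ U.ncard := by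
  induction L generalizing U with
  | nil => exact ⟨∅, Set.empty_subset U, rfl, by simp⟩
  | cons φ rest ih =>
    obtain ⟨A₁, hA₁U, hA₁, hA₁card⟩ := hL φ List.mem_cons_self U hU
    cases rest with
    | nil => exact ⟨A₁, hA₁U, hA₁, by simpa using hA₁card⟩
    | cons ψ rest =>
      obtain ⟨A₂, hA₂U, hA₂, hA₂card⟩ :=
        ih (fun χ hχ => hL χ (List.mem_cons_of_mem φ hχ)) (hU.sdiff (t := A₁))
      refine ⟨A₁ ∪ A₂, Set.union_subset hA₁U (hA₂U.trans Set.sdiff_subset),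
        ⟨A₁, A₂, rfl, hA₁, hA₂⟩, ?_⟩
      rw [← Set.sdiff_sdiff, List.length_cons, pow_succ, mul_comm _ 2, mul_assoc]
      calc 2 * (2 ^ (ψ :: rest).length * ((U \ A₁) \ A₂).ncard)
          ≤ 2 * (U \ A₁).ncard := Nat.mul_le_mul_left 2 hA₂card
        _ ≤ U.ncard := hA₁card

theorem sat_bigDor_of_ncard_lt {L : List (MDL AP)} (hL : ∀ φ ∈ L, SatOnHalf R π φ)
    {U : Set S} (hU : U.Finite) (hcard : U.ncard < 2 ^ L.length) :
    sat R π (bigDor L) U := by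
  obtain ⟨A, hAU, hA, hAcard⟩ := exists_sat_bigDor R π hL hU
  have hempty : U \ A = ∅ := by
    rw [← Set.ncard_eq_zero (hU.sdiff (t := A))]
    by_contra h
    have := Nat.mul_le_mul_left (2 ^ L.length) (Nat.one_le_iff_ne_zero.2 h)
    omega
  rwa [hAU.antisymm (Set.sdiff_eq_empty.1 hempty)] at hA

end MDL

/-- Let `ψ_{i+1} = dep(ps i; q i)` (`i : Fin ℓ`) be dependence
atoms and `T` a finite team with `|T| < 2^ℓ`.  Then for every `1 ≤ k ≤ ℓ`
there is a subteam `T_k ⊆ T` with `W, T_k ⊨ ψ₁ ∨ … ∨ ψ_k` and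
`|T \ T_k| < 2^{ℓ-k}`; in particular `W, T ⊨ ψ₁ ∨ … ∨ ψ_ℓ`. -/
theorem stmt9 {S AP : Type} (R : S → S → Prop) (π : S → Set AP)
    (ℓ : ℕ) (ps : Fin ℓ → List AP) (q : Fin ℓ → AP)
    (T : Set S) (hT : T.Finite) (hcard : T.ncard < 2 ^ ℓ) :
    (∀ k : ℕ, 1 ≤ k → k ≤ ℓ →
      ∃ Tk ⊆ T,
        MDL.sat R π
          (MDL.bigDor (((List.finRange ℓ).take k).map fun i => MDL.dep (ps i) (q i)))
          Tk ∧
        (T \ Tk).ncard < 2 ^ (ℓ - k)) ∧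
    MDL.sat R π
      (MDL.bigDor ((List.finRange ℓ).map fun i => MDL.dep (ps i) (q i))) T := by
  have hdeps : ∀ L : List (Fin ℓ), ∀ φ ∈ L.map fun i => MDL.dep (ps i) (q i),
      MDL.SatOnHalf R π φ := by
    simp only [List.mem_map]
    rintro L _ ⟨i, -, rfl⟩
    exact MDL.satOnHalf_dep R π (ps i) (q i)
  refine ⟨fun k _ hkℓ => ?_, MDL.sat_bigDor_of_ncard_lt R π (hdeps _) hT (by simpa using hcard)⟩
  obtain ⟨Tk, hTkT, hTk, hTkcard⟩ := MDL.exists_sat_bigDor R π (hdeps _) hT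
  rw [List.length_map, List.length_take, List.length_finRange, min_eq_left hkℓ] at hTkcard
  refine ⟨Tk, hTkT, hTk, Nat.lt_of_mul_lt_mul_left (a := 2 ^ k) ?_⟩
  rw [← pow_add, Nat.add_sub_cancel' hkℓ]
  exact hTkcard.trans_lt hcard
end

section
/- Let φ be an MDL formula built from ⊤, ⊥, atoms, negated atoms, dependence atoms and negated dependence atoms using only the unary connectives □ and ◇ and the binary connective ⊻ (classical disjunction), i.e., containing neither ∧ nor ∨. Then there exist finitely many ⊻-free formulas ψ₁,…,ψ_r (each built from ⊤, ⊥, atoms, negated atoms, dependence atoms and negated dependence atoms using only □ and ◇), with r at most the number of subformulas of φ, such that for every Kripke structure W=(S,R,π) and every team T⊆S: W,T ⊨ φ if and only if W,T ⊨ ψ_i for some i∈{1,…,r}. -/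
/-- `φ` contains neither `∧` nor `∨`, i.e. it is built from `⊤`, `⊥`, atoms,
negated atoms and (negated) dependence atoms using only `□`, `◇` and the
classical disjunction `⊻`. -/
def MDL.UnaryCor {AP : Type} : MDL AP → Prop
  | .and _ _ => False
  | .dor _ _ => False
  | .cor φ ψ => MDL.UnaryCor φ ∧ MDL.UnaryCor ψ
  | .box φ => MDL.UnaryCor φ
  | .dia φ => MDL.UnaryCor φ
  | _ => True

/-- `φ` is `⊻`-free and contains no binary connective at all, i.e. it is built
from `⊤`, `⊥`, atoms, negated atoms and (negated) dependence atoms using only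
`□` and `◇`. -/
def MDL.UnaryOnly {AP : Type} : MDL AP → Prop
  | .and _ _ => False
  | .dor _ _ => False
  | .cor _ _ => False
  | .box φ => MDL.UnaryOnly φ
  | .dia φ => MDL.UnaryOnly φ
  | _ => True

/-- The number of subformula occurrences of `φ`. -/
def MDL.size {AP : Type} : MDL AP → ℕ
  | .and φ ψ => MDL.size φ + MDL.size ψ + 1
  | .dor φ ψ => MDL.size φ + MDL.size ψ + 1
  | .cor φ ψ => MDL.size φ + MDL.size ψ + 1
  | .box φ => MDL.size φ + 1
  | .dia φ => MDL.size φ + 1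
  | _ => 1

/-- Every formula built with only `□`, `◇` and `⊻` is
equivalent to a classical disjunction of at most `size φ` many `⊻`-free
formulas built with only `□` and `◇`: there is a list `L` of such formulas
with `W,T ⊨ φ` iff `W,T ⊨ ψ` for some `ψ ∈ L`, over every Kripke structure
and team. -/
theorem stmt14 {AP : Type} (φ : MDL AP) (hφ : MDL.UnaryCor φ) :
    ∃ L : List (MDL AP),
      L.length ≤ MDL.size φ ∧
      (∀ ψ ∈ L, MDL.UnaryOnly ψ) ∧
      ∀ (S : Type) (R : S → S → Prop) (π : S → Set AP) (T : Set S),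
        MDL.sat R π φ T ↔ ∃ ψ ∈ L, MDL.sat R π ψ T := by
  induction φ with
  | and φ ψ ih1 ih2 => exact absurd hφ (by simp [MDL.UnaryCor])
  | dor φ ψ ih1 ih2 => exact absurd hφ (by simp [MDL.UnaryCor])
  | cor φ ψ ih1 ih2 =>
    obtain ⟨h1, h2⟩ := hφ
    obtain ⟨L1, hl1, hu1, hs1⟩ := ih1 h1
    obtain ⟨L2, hl2, hu2, hs2⟩ := ih2 h2
    refine ⟨L1 ++ L2, by simp [MDL.size]; omega, ?_, ?_⟩
    · intro ψ' h; rcases List.mem_append.mp h with h | h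
      exacts [hu1 _ h, hu2 _ h]
    · intro S R π T
      show MDL.sat R π φ T ∨ MDL.sat R π ψ T ↔ _
      rw [hs1, hs2]
      constructor
      · rintro (⟨x, hx, h⟩ | ⟨x, hx, h⟩)
        · exact ⟨x, List.mem_append.mpr (Or.inl hx), h⟩
        · exact ⟨x, List.mem_append.mpr (Or.inr hx), h⟩
      · rintro ⟨x, hx, h⟩
        rcases List.mem_append.mp hx with hx | hx
        · exact Or.inl ⟨x, hx, h⟩
        · exact Or.inr ⟨x, hx, h⟩
  | box φ ih =>
    obtain ⟨L, hl, hu, hs⟩ := ih hφ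
    refine ⟨L.map .box, by simpa [MDL.size] using hl.trans (Nat.le_succ _), ?_, ?_⟩
    · intro ψ' h
      obtain ⟨x, hx, rfl⟩ := List.mem_map.mp h
      exact hu x hx
    · intro S R π T
      show MDL.sat R π φ _ ↔ _
      rw [hs]
      constructor
      · rintro ⟨x, hx, h⟩
        exact ⟨.box x, List.mem_map.mpr ⟨x, hx, rfl⟩, h⟩
      · rintro ⟨x, hx, h⟩
        obtain ⟨y, hy, rfl⟩ := List.mem_map.mp hx
        exact ⟨y, hy, h⟩
  | dia φ ih =>
    obtain ⟨L, hl, hu, hs⟩ := ih hφ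
    refine ⟨L.map .dia, by simpa [MDL.size] using hl.trans (Nat.le_succ _), ?_, ?_⟩
    · intro ψ' h
      obtain ⟨x, hx, rfl⟩ := List.mem_map.mp h
      exact hu x hx
    · intro S R π T
      constructor
      · rintro ⟨T', hT', hcov⟩
        obtain ⟨x, hx, h⟩ := (hs S R π T').mp hT'
        exact ⟨.dia x, List.mem_map.mpr ⟨x, hx, rfl⟩, T', h, hcov⟩
      · rintro ⟨x, hx, h⟩
        obtain ⟨y, hy, rfl⟩ := List.mem_map.mp hx
        obtain ⟨T', hT', hcov⟩ := h
        exact ⟨T', (hs S R π T').mpr ⟨y, hy, hT'⟩, hcov⟩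
  | top => exact ⟨[.top], le_refl _, by simp [MDL.UnaryOnly], fun S R π T => by simp [MDL.sat]⟩
  | bot => exact ⟨[.bot], le_refl _, by simp [MDL.UnaryOnly], fun S R π T => by simp [MDL.sat]⟩
  | atom p => exact ⟨[.atom p], le_refl _, by simp [MDL.UnaryOnly], fun S R π T => by simp [MDL.sat]⟩
  | natom p => exact ⟨[.natom p], le_refl _, by simp [MDL.UnaryOnly], fun S R π T => by simp [MDL.sat]⟩
  | dep ps q => exact ⟨[.dep ps q], le_refl _, by simp [MDL.UnaryOnly], fun S R π T => by simp [MDL.sat]⟩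
  | ndep ps q => exact ⟨[.ndep ps q], le_refl _, by simp [MDL.UnaryOnly], fun S R π T => by simp [MDL.sat]⟩
end
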